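/- arXiv:1601.01504 — 2 statements merged into one kernel-verified Lean document; each statement's English description precedes it below -/
import Mathlib

section
/- Let C be an almost affine code of length n and dimension k on alphabet F, with associated matroid rank function r. For any codeword c̃ ∈ C and any X ⊆ {1,...,n}, the set C(X,c̃) = {c ∈ C : c agrees with c̃ on X} is an almost affine subcode of C and |C(X,c̃)| = |F|^{k - r(X)}. -/
/-!
Downward induction on `X`. If every fibre of `C` over `X ∪ {i}` has `q ^ (k - r (X ∪ {i}))`
elements, a fibre over `X` is a disjoint union of `m` such fibres with `1 ≤ m ≤ q`. Summing over
the `q ^ r X` fibres over `X` gives `∑ m = q ^ r (X ∪ {i})`, a power of `q` between `q ^ r X` and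
`q ^ (r X + 1)`; hence either every `m` is `1` or every `m` is `q`, and in both cases each
fibre over `X` has `q ^ (k - r X)` elements. The fibres of `C(X, c̃)` over `Z` are fibres of `C`
over `X ∪ Z`, so its projections have `q ^ (r (X ∪ Z) - r X)` elements.
-/

/-- The projection (puncturing) of a block code `C ⊆ F^n` to the coordinate set `X`. -/
def projC {F : Type*} [DecidableEq F] {n : ℕ} (C : Finset (Fin n → F)) (X : Finset (Fin n)) :
    Finset ({ i // i ∈ X } → F) :=
  C.image (fun c i => c i.1)

/-- `C ⊆ F^n` is an almost affine code of length `n` and dimension `k`: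
`|C| = |F|^k` and every projection has cardinality a power of `|F|`. -/
def IsAlmostAffineCode {F : Type*} [Fintype F] [DecidableEq F] (n k : ℕ)
    (C : Finset (Fin n → F)) : Prop :=
  C.card = Fintype.card F ^ k ∧
    ∀ X : Finset (Fin n), ∃ s : ℕ, (projC C X).card = Fintype.card F ^ s

/-- The `ct`-support of a word `c`. -/
def suppW {F : Type*} [DecidableEq F] {n : ℕ} (c ct : Fin n → F) : Finset (Fin n) :=
  Finset.univ.filter (fun i => c i ≠ ct i)

/-- `C(X, ct)`: the codewords of `C` agreeing with `ct` on `X`. -/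
def agreeOn {F : Type*} [DecidableEq F] {n : ℕ} (C : Finset (Fin n → F))
    (X : Finset (Fin n)) (ct : Fin n → F) : Finset (Fin n → F) :=
  C.filter (fun w => ∀ i ∈ X, w i = ct i)

/-- The `ct`-support of a code `D`. -/
def suppCode {F : Type*} [DecidableEq F] {n : ℕ} (D : Finset (Fin n → F)) (ct : Fin n → F) :
    Finset (Fin n) :=
  D.biUnion (fun w => suppW w ct)

section Aux
open Finset

section Projection

variable {F : Type*} [DecidableEq F] {n : ℕ}

lemma projC_eq_image_restrict (C : Finset (Fin n → F)) (X : Finset (Fin n)) :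
    projC C X = C.image X.restrict := rfl

lemma agreeOn_subset (C : Finset (Fin n → F)) (X : Finset (Fin n)) (w : Fin n → F) :
    agreeOn C X w ⊆ C :=
  filter_subset _ _

lemma self_mem_agreeOn {C : Finset (Fin n → F)} {w : Fin n → F} (hw : w ∈ C)
    (X : Finset (Fin n)) : w ∈ agreeOn C X w :=
  mem_filter.mpr ⟨hw, fun _ _ => rfl⟩

lemma agreeOn_eq_filter_restrict (C : Finset (Fin n → F)) (X : Finset (Fin n))
    (w : Fin n → F) : agreeOn C X w = {c ∈ C | X.restrict c = X.restrict w} := by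
  ext c
  simp [agreeOn, funext_iff, Finset.restrict]

lemma agreeOn_agreeOn {C : Finset (Fin n → F)} {X Y : Finset (Fin n)} {w v : Fin n → F}
    (hv : v ∈ agreeOn C X w) : agreeOn (agreeOn C X w) Y v = agreeOn C (X ∪ Y) v := by
  simp only [agreeOn, mem_filter] at hv ⊢
  ext c
  simp only [mem_filter, mem_union]
  grind

lemma card_eq_card_projC_mul {D : Finset (Fin n → F)} {Z : Finset (Fin n)} {Q : ℕ}
    (h : ∀ w ∈ D, #(agreeOn D Z w) = Q) : #D = #(projC D Z) * Q := by
  rw [card_eq_sum_card_image Z.restrict D, projC_eq_image_restrict, ← smul_eq_mul, ← sum_const]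
  refine sum_congr rfl fun x hx => ?_
  obtain ⟨w, hw, rfl⟩ := mem_image.mp hx
  rw [← agreeOn_eq_filter_restrict, h w hw]

lemma card_projC_le_card (D : Finset (Fin n → F)) (Z : Finset (Fin n)) :
    #(projC D Z) ≤ #D :=
  card_image_le

lemma card_projC_mono (D : Finset (Fin n → F)) {X Y : Finset (Fin n)} (h : X ⊆ Y) :
    #(projC D X) ≤ #(projC D Y) := by
  have : projC D X = (projC D Y).image (Finset.restrict₂ (π := fun _ => F) h) := by
    rw [projC_eq_image_restrict, projC_eq_image_restrict, image_image]
    rfl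
  rw [this]
  exact card_image_le

lemma card_projC_le_pow [Fintype F] (D : Finset (Fin n → F)) (Z : Finset (Fin n)) :
    #(projC D Z) ≤ Fintype.card F ^ #Z :=
  calc #(projC D Z) ≤ Fintype.card ({i // i ∈ Z} → F) := card_le_univ _
    _ = Fintype.card F ^ #Z := by simp

end Projection

lemma eq_pow_sub_of_sum_eq_pow {ι : Type*} {s : Finset ι} {g : ι → ℕ} {q a b : ℕ}
    (hq : 1 < q) (hs : #s = q ^ a) (hg : ∀ x ∈ s, 1 ≤ g x ∧ g x ≤ q)
    (hsum : ∑ x ∈ s, g x = q ^ b) : ∀ x ∈ s, g x = q ^ (b - a) := by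
  have hlow : ∑ _x ∈ s, 1 ≤ ∑ x ∈ s, g x := sum_le_sum fun x hx => (hg x hx).1
  have hhigh : ∑ x ∈ s, g x ≤ ∑ _x ∈ s, q := sum_le_sum fun x hx => (hg x hx).2
  simp only [sum_const, smul_eq_mul, mul_one, hs, hsum, ← pow_succ] at hlow hhigh
  rw [Nat.pow_le_pow_iff_right hq] at hlow hhigh
  obtain hb | hb : b = a ∨ b = a + 1 := by omega
  · have hall := (sum_eq_sum_iff_of_le fun x hx => (hg x hx).1).mp
      (by rw [hsum, sum_const, smul_eq_mul, mul_one, hs, hb])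
    simpa [hb, eq_comm] using hall
  · have hall := (sum_eq_sum_iff_of_le fun x hx => (hg x hx).2).mp
      (by rw [hsum, sum_const, smul_eq_mul, hs, hb, pow_succ])
    simpa [hb] using hall

section Rank

variable {F : Type*} [Fintype F] [DecidableEq F] {n k : ℕ} {C : Finset (Fin n → F)}
  {r : Finset (Fin n) → ℕ}

lemma rank_mono (hF : 1 < Fintype.card F)
    (hr : ∀ X : Finset (Fin n), #(projC C X) = Fintype.card F ^ r X)
    {X Y : Finset (Fin n)} (h : X ⊆ Y) : r X ≤ r Y := by
  have := card_projC_mono C h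
  rwa [hr, hr, Nat.pow_le_pow_iff_right hF] at this

lemma rank_le_dim (hF : 1 < Fintype.card F) (hC : #C = Fintype.card F ^ k)
    (hr : ∀ X : Finset (Fin n), #(projC C X) = Fintype.card F ^ r X)
    (X : Finset (Fin n)) : r X ≤ k := by
  have := card_projC_le_card C X
  rwa [hr, hC, Nat.pow_le_pow_iff_right hF] at this

lemma card_agreeOn_univ (hF : 1 < Fintype.card F) (hC : #C = Fintype.card F ^ k)
    (hr : ∀ X : Finset (Fin n), #(projC C X) = Fintype.card F ^ r X)
    {c : Fin n → F} (hc : c ∈ C) : #(agreeOn C univ c) = Fintype.card F ^ (k - r univ) := by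
  have hsingle : ∀ w ∈ C, agreeOn C univ w = {w} := fun w hw => by
    ext u
    simp only [agreeOn, mem_filter, mem_univ, forall_const, mem_singleton]
    constructor
    · rintro ⟨-, h⟩
      exact funext h
    · rintro rfl
      exact ⟨hw, fun _ => rfl⟩
  have hrank : r univ = k := by
    have := card_eq_card_projC_mul fun w hw => by rw [hsingle w hw, card_singleton]
    rw [mul_one, hr, hC] at this
    exact Nat.pow_right_injective hF this.symm
  rw [hsingle c hc, hrank, Nat.sub_self, pow_zero, card_singleton]

lemma card_agreeOn_of_card_agreeOn_union_singleton (hF : 1 < Fintype.card F)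
    (hC : #C = Fintype.card F ^ k)
    (hr : ∀ X : Finset (Fin n), #(projC C X) = Fintype.card F ^ r X)
    (X : Finset (Fin n)) (i : Fin n)
    (hXi : ∀ c ∈ C, #(agreeOn C (X ∪ {i}) c) = Fintype.card F ^ (k - r (X ∪ {i}))) :
    ∀ c ∈ C, #(agreeOn C X c) = Fintype.card F ^ (k - r X) := by
  set q := Fintype.card F
  set Q := q ^ (k - r (X ∪ {i}))
  have hsplit : ∀ w ∈ C, #(agreeOn C X w) = #(projC (agreeOn C X w) {i}) * Q :=
    fun w _ => card_eq_card_projC_mul fun v hv => by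
      rw [agreeOn_agreeOn hv]
      exact hXi v (agreeOn_subset C X w hv)
  set g : ({j // j ∈ X} → F) → ℕ := fun x => #(projC {c ∈ C | X.restrict c = x} {i})
  have hg_of_mem : ∀ w ∈ C, g (X.restrict w) = #(projC (agreeOn C X w) {i}) := fun w _ => by
    simp only [g, agreeOn_eq_filter_restrict]
  have hg_bounds : ∀ x ∈ projC C X, 1 ≤ g x ∧ g x ≤ q := by
    intro x hx
    rw [projC_eq_image_restrict] at hx
    obtain ⟨w, hw, rfl⟩ := mem_image.mp hx
    rw [hg_of_mem w hw]
    refine ⟨card_pos.mpr ((image_nonempty).mpr ⟨w, self_mem_agreeOn hw X⟩), ?_⟩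
    simpa using card_projC_le_pow (agreeOn C X w) {i}
  have hg_sum : ∑ x ∈ projC C X, g x = q ^ r (X ∪ {i}) := by
    have hQ : 0 < Q := pow_pos (by omega) _
    refine Nat.eq_of_mul_eq_mul_right hQ ?_
    rw [← pow_add, Nat.add_sub_cancel' (rank_le_dim hF hC hr _), ← hC, sum_mul,
      card_eq_sum_card_image X.restrict C]
    refine sum_congr rfl fun x hx => ?_
    obtain ⟨w, hw, rfl⟩ := mem_image.mp hx
    rw [hg_of_mem w hw, ← hsplit w hw, agreeOn_eq_filter_restrict]
  have hg := eq_pow_sub_of_sum_eq_pow hF (hr X) hg_bounds hg_sum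
  intro c hc
  have hXXi := rank_mono hF hr (subset_union_left : X ⊆ X ∪ {i})
  have hXik := rank_le_dim hF hC hr (X ∪ {i})
  rw [hsplit c hc, ← hg_of_mem c hc, hg _ (mem_image_of_mem X.restrict hc), ← pow_add]
  congr 1
  omega

theorem card_agreeOn (hF : 1 < Fintype.card F) (hC : #C = Fintype.card F ^ k)
    (hr : ∀ X : Finset (Fin n), #(projC C X) = Fintype.card F ^ r X) (X : Finset (Fin n)) :
    ∀ c ∈ C, #(agreeOn C X c) = Fintype.card F ^ (k - r X) := by
  refine Finset.strongDownwardInductionOn (n := n) X (fun X ih _ => ?_)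
    (by simpa using card_le_univ X)
  by_cases hX : X = univ
  · exact hX ▸ fun c hc => card_agreeOn_univ hF hC hr hc
  · obtain ⟨i, hi⟩ : ∃ i, i ∉ X := by simpa [eq_univ_iff_forall] using hX
    refine card_agreeOn_of_card_agreeOn_union_singleton hF hC hr X i (ih ?_ ?_)
    · simpa using card_le_univ (X ∪ {i})
    · exact Finset.ssubset_iff_subset_ne.mpr ⟨subset_union_left, fun h => hi (h ▸ by simp)⟩

lemma card_projC_agreeOn (hF : 1 < Fintype.card F) (hC : #C = Fintype.card F ^ k)
    (hr : ∀ X : Finset (Fin n), #(projC C X) = Fintype.card F ^ r X)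
    {c : Fin n → F} (hc : c ∈ C) (X Z : Finset (Fin n)) :
    #(projC (agreeOn C X c) Z) = Fintype.card F ^ (r (X ∪ Z) - r X) := by
  have hsplit := card_eq_card_projC_mul (D := agreeOn C X c) (Z := Z) fun w hw => by
    rw [agreeOn_agreeOn hw]
    exact card_agreeOn hF hC hr (X ∪ Z) w (agreeOn_subset C X c hw)
  rw [card_agreeOn hF hC hr X c hc] at hsplit
  have hXZ := rank_mono hF hr (subset_union_left : X ⊆ X ∪ Z)
  have hXZk := rank_le_dim hF hC hr (X ∪ Z)
  refine Nat.eq_of_mul_eq_mul_right (pow_pos (by omega : 0 < Fintype.card F) (k - r (X ∪ Z))) ?_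
  rw [← hsplit, ← pow_add]
  congr 1
  omega

end Rank

/-- for an almost affine code `C` with rank function `r`, a codeword `ct` and
`X ⊆ {1,…,n}`, the set `C(X, ct)` is an almost affine subcode of `C` of cardinality
`|F|^{k - r(X)}`. -/
theorem agreeOn_is_subcode_card
    {F : Type*} [Fintype F] [DecidableEq F] (hF : 1 < Fintype.card F)
    {n k : ℕ} (C : Finset (Fin n → F)) (hC : IsAlmostAffineCode n k C)
    (r : Finset (Fin n) → ℕ)
    (hr : ∀ X : Finset (Fin n), (projC C X).card = Fintype.card F ^ r X)
    (ct : Fin n → F) (hct : ct ∈ C) (X : Finset (Fin n)) :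
    agreeOn C X ct ⊆ C ∧ IsAlmostAffineCode n (k - r X) (agreeOn C X ct) ∧
      (agreeOn C X ct).card = Fintype.card F ^ (k - r X) := by
  have hcard := card_agreeOn hF hC.1 hr X ct hct
  exact ⟨agreeOn_subset C X ct,
    ⟨hcard, fun Z => ⟨_, card_projC_agreeOn hF hC.1 hr hct X Z⟩⟩, hcard⟩
end Aux
end

section
/- Let C be a non-degenerate almost affine code of length n and dimension k on alphabet F. For k+1 ≤ i ≤ n, the i-th critical exponent satisfies γ_i ≤ s*_{n+1−i} + 2, where s*_j = k + j − d*_j and d*_j is the j-th generalized Hamming weight of the matroid M_C associated to C. -/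
/-- The `i`-th generalized critical exponent of `C` with respect to `ct`:
the minimal number `j` of codewords whose `ct`-supports together cover at least `i`
coordinates. -/
noncomputable def critExp {F : Type*} [Fintype F] [DecidableEq F] {n : ℕ}
    (C : Finset (Fin n → F)) (ct : Fin n → F) (i : ℕ) : ℕ :=
  sInf {j : ℕ | ∃ cs : Fin j → (Fin n → F), (∀ l, cs l ∈ C) ∧
    i ≤ (Finset.univ.biUnion fun l => suppW (cs l) ct).card}

set_option linter.unusedSectionVars false
set_option linter.unusedVariables false
open Finset

section KungAux

variable {F : Type*} [Fintype F] [DecidableEq F]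
variable {ι : Type} [Fintype ι] [DecidableEq ι]

def proj' (C : Finset (ι → F)) (X : Finset ι) : Finset ({ i // i ∈ X } → F) :=
  C.image (fun c i => c i.1)

def agree' (C : Finset (ι → F)) (X : Finset ι) (ct : ι → F) : Finset (ι → F) :=
  C.filter (fun w => ∀ i ∈ X, w i = ct i)

def supp' (c ct : ι → F) : Finset ι :=
  Finset.univ.filter (fun i => c i ≠ ct i)

def res {X Y : Finset ι} (_ : X ⊆ Y) (f : { i // i ∈ Y } → F) : { i // i ∈ X } → F :=
  fun i => f ⟨i.1, ‹X ⊆ Y› i.2⟩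

lemma res_self {X : Finset ι} (h : X ⊆ X) (α : { i // i ∈ X } → F) : res h α = α :=
  funext fun i => congrArg α (Subtype.ext rfl)

lemma proj'_eq_image {C : Finset (ι → F)} {X Y : Finset ι} (h : X ⊆ Y) :
    proj' C X = (proj' C Y).image (res h) := by
  unfold proj' res
  rw [Finset.image_image]
  rfl

lemma res_mem_proj' {C : Finset (ι → F)} {X Y : Finset ι} (h : X ⊆ Y)
    {α : { i // i ∈ Y } → F} (hα : α ∈ proj' C Y) : res h α ∈ proj' C X := by
  rw [proj'_eq_image h]
  exact Finset.mem_image_of_mem _ hα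

lemma proj'_card_mono {C : Finset (ι → F)} {X Y : Finset ι} (h : X ⊆ Y) :
    (proj' C X).card ≤ (proj' C Y).card := by
  rw [proj'_eq_image h]; exact Finset.card_image_le

lemma proj'_univ_card (C : Finset (ι → F)) : (proj' C (univ : Finset ι)).card = C.card := by
  unfold proj'
  apply Finset.card_image_of_injective
  intro c c' hcc
  funext y
  exact congrFun hcc ⟨y, mem_univ y⟩

variable {C : Finset (ι → F)} {r : Finset ι → ℕ} {k : ℕ}

lemma r_mono (hq : 1 < Fintype.card F)
    (hr : ∀ X : Finset ι, (proj' C X).card = Fintype.card F ^ r X)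
    {X Y : Finset ι} (h : X ⊆ Y) : r X ≤ r Y := by
  have := proj'_card_mono (C := C) h
  rw [hr X, hr Y] at this
  exact (Nat.pow_le_pow_iff_right hq).mp this

lemma r_insert_le (hq : 1 < Fintype.card F)
    (hr : ∀ X : Finset ι, (proj' C X).card = Fintype.card F ^ r X)
    (x : ι) (X : Finset ι) : r (insert x X) ≤ r X + 1 := by
  by_cases hx : x ∈ X
  · rw [Finset.insert_eq_self.mpr hx]; omega
  -- injective map into (proj' C X) ×ˢ univ
  have hcard : (proj' C (insert x X)).card ≤ ((proj' C X) ×ˢ (univ : Finset F)).card := by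
    apply Finset.card_le_card_of_injOn
      (fun α => (res (Finset.subset_insert x X) α, α ⟨x, Finset.mem_insert_self x X⟩))
    · intro α hα
      exact Finset.mem_product.mpr ⟨res_mem_proj' (Finset.subset_insert x X) hα, mem_univ _⟩
    · intro α₁ h₁ α₂ h₂ heq
      have h1 := congrArg Prod.fst heq
      have h2 := congrArg Prod.snd heq
      simp only at h1 h2
      funext i
      rcases Finset.mem_insert.mp i.2 with hix | hiX
      · have : i = ⟨x, Finset.mem_insert_self x X⟩ := Subtype.ext hix
        rw [this]; exact h2
      · have := congrFun h1 ⟨i.1, hiX⟩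
        simpa [res] using this
  rw [Finset.card_product, Finset.card_univ, hr, hr] at hcard
  calc r (insert x X) ≤ r X + 1 := by
        by_contra hcon
        push_neg at hcon
        have : Fintype.card F ^ (r X + 1) < Fintype.card F ^ r (insert x X) :=
          Nat.pow_lt_pow_right hq hcon
        rw [pow_succ] at this
        omega

lemma one_step (hq : 1 < Fintype.card F)
    (hr : ∀ X : Finset ι, (proj' C X).card = Fintype.card F ^ r X)
    {X : Finset ι} {x : ι} {β : {i // i ∈ X} → F} (hβ : β ∈ proj' C X) :
    ((proj' C (insert x X)).filter
        (fun α => res (Finset.subset_insert x X) α = β)).card * Fintype.card F ^ r X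
      = Fintype.card F ^ r (insert x X) := by
  set q := Fintype.card F with hqdef
  set Z := insert x X with hZdef
  have hXZ : X ⊆ Z := Finset.subset_insert x X
  have hsum : ∑ β' ∈ proj' C X, ((proj' C Z).filter
      (fun α => res (Finset.subset_insert x X) α = β')).card = (proj' C Z).card :=
    (Finset.card_eq_sum_card_fiberwise (fun α hα => res_mem_proj' hXZ hα)).symm
  have hpos : ∀ β' ∈ proj' C X, 1 ≤ ((proj' C Z).filter
      (fun α => res (Finset.subset_insert x X) α = β')).card := by
    intro β' hβ'
    rw [Nat.one_le_iff_ne_zero, ← Nat.pos_iff_ne_zero, Finset.card_pos]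
    rw [proj'_eq_image hXZ] at hβ'
    obtain ⟨α, hα, hαβ⟩ := Finset.mem_image.mp hβ'
    exact ⟨α, Finset.mem_filter.mpr ⟨hα, hαβ⟩⟩
  have hub : ∀ β' ∈ proj' C X, ((proj' C Z).filter
      (fun α => res (Finset.subset_insert x X) α = β')).card ≤ q := by
    intro β' hβ'
    have h : ((proj' C Z).filter (fun α => res (Finset.subset_insert x X) α = β')).card
        ≤ (univ : Finset F).card := by
      apply Finset.card_le_card_of_injOn (fun α => α ⟨x, Finset.mem_insert_self x X⟩)
      · intro _ _; exact mem_univ _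
      · intro α₁ h₁ α₂ h₂ heq
        have hf₁ := (Finset.mem_filter.mp (Finset.mem_coe.mp h₁)).2
        have hf₂ := (Finset.mem_filter.mp (Finset.mem_coe.mp h₂)).2
        funext i
        rcases Finset.mem_insert.mp i.2 with hix | hiX
        · have : i = ⟨x, Finset.mem_insert_self x X⟩ := Subtype.ext hix
          rw [this]; exact heq
        · have := congrFun (hf₁.trans hf₂.symm) ⟨i.1, hiX⟩
          simpa [res] using this
    simpa using h
  have hZr : r X ≤ r Z := r_mono hq hr hXZ
  have hZr2 : r Z ≤ r X + 1 := by rw [hZdef]; exact r_insert_le hq hr x X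
  have hM : 1 ≤ (proj' C X).card := Finset.card_pos.mpr ⟨β, hβ⟩
  have h1 := Finset.add_sum_erase _ (fun β' => ((proj' C Z).filter
      (fun α => res (Finset.subset_insert x X) α = β')).card) hβ
  beta_reduce at h1
  have h3 : ((proj' C X).erase β).card = (proj' C X).card - 1 := Finset.card_erase_of_mem hβ
  rcases Nat.eq_or_lt_of_le hZr with hcase | hlt
  · have hsum' : ∑ β' ∈ proj' C X, ((proj' C Z).filter
        (fun α => res (Finset.subset_insert x X) α = β')).card = (proj' C X).card := by
      rw [hsum, hr Z, ← hcase, ← hr X]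
    rw [hsum'] at h1
    have h2 := Finset.card_nsmul_le_sum ((proj' C X).erase β) (fun β' => ((proj' C Z).filter
        (fun α => res (Finset.subset_insert x X) α = β')).card) 1
        (fun β' hβ' => hpos β' (Finset.mem_of_mem_erase hβ'))
    beta_reduce at h2
    simp only [smul_eq_mul, mul_one] at h2
    have ha1 : ((proj' C Z).filter
        (fun α => res (Finset.subset_insert x X) α = β)).card = 1 := by
      have := hpos β hβ
      omega
    rw [ha1, ← hcase, one_mul]
  · have hcase : r Z = r X + 1 := le_antisymm hZr2 hlt
    obtain ⟨M', hM'⟩ : ∃ M', (proj' C X).card = M' + 1 := ⟨(proj' C X).card - 1, by omega⟩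
    have hsum' : ∑ β' ∈ proj' C X, ((proj' C Z).filter
        (fun α => res (Finset.subset_insert x X) α = β')).card = M' * q + q := by
      rw [hsum, hr Z, hcase, pow_succ, ← hr X, hM']
      ring
    rw [hsum'] at h1
    have h2 := Finset.sum_le_card_nsmul ((proj' C X).erase β) (fun β' => ((proj' C Z).filter
        (fun α => res (Finset.subset_insert x X) α = β')).card) q
        (fun β' hβ' => hub β' (Finset.mem_of_mem_erase hβ'))
    beta_reduce at h2
    rw [h3, hM'] at h2
    simp only [smul_eq_mul, Nat.add_sub_cancel] at h2
    have hub' := hub β hβ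
    have haq : ((proj' C Z).filter
        (fun α => res (Finset.subset_insert x X) α = β)).card = q := by
      generalize hgen : M' * q = t at h1 h2
      omega
    rw [haq, hcase, pow_succ]
    ring
lemma fib_card (hq : 1 < Fintype.card F)
    (hr : ∀ X : Finset ι, (proj' C X).card = Fintype.card F ^ r X) :
    ∀ (p : ℕ) (X Y : Finset ι) (h : X ⊆ Y), (Y \ X).card = p →
    ∀ β ∈ proj' C X,
      ((proj' C Y).filter (fun α => res h α = β)).card * Fintype.card F ^ r X
        = Fintype.card F ^ r Y := by
  intro p
  induction p using Nat.strong_induction_on with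
  | _ p IH =>
    intro X Y h hp β hβ
    rcases Nat.eq_zero_or_pos p with hp0 | hppos
    · subst hp0
      have hYX : Y ⊆ X := by
        rwa [← Finset.sdiff_eq_empty_iff_subset, ← Finset.card_eq_zero]
      have hXY : X = Y := Finset.Subset.antisymm h hYX
      subst hXY
      have hfilter : (proj' C X).filter (fun α => res h α = β) = {β} := by
        ext α
        simp only [Finset.mem_filter, Finset.mem_singleton, res_self]
        constructor
        · rintro ⟨_, h⟩; exact h
        · rintro rfl; exact ⟨hβ, rfl⟩
      rw [hfilter, Finset.card_singleton, one_mul]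
    · obtain ⟨x, hx⟩ := Finset.card_pos.mp (hp ▸ hppos)
      have hxY : x ∈ Y := (Finset.mem_sdiff.mp hx).1
      have hxX : x ∉ X := (Finset.mem_sdiff.mp hx).2
      have hXZ : X ⊆ insert x X := Finset.subset_insert x X
      have hZY : insert x X ⊆ Y := Finset.insert_subset hxY h
      have hYZcard : (Y \ insert x X).card = p - 1 := by
        rw [Finset.sdiff_insert, Finset.card_erase_of_mem hx, hp]
      have hdecomp : (proj' C Y).filter (fun α => res h α = β)
          = ((proj' C (insert x X)).filter
              (fun γ => res (Finset.subset_insert x X) γ = β)).biUnion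
              (fun γ => (proj' C Y).filter (fun α => res hZY α = γ)) := by
        ext α
        simp only [Finset.mem_biUnion, Finset.mem_filter]
        constructor
        · rintro ⟨hα, hres⟩
          exact ⟨res hZY α, ⟨res_mem_proj' hZY hα, hres⟩, hα, rfl⟩
        · rintro ⟨γ, ⟨hγ, hγβ⟩, hα, hαγ⟩
          refine ⟨hα, ?_⟩
          rw [show res h α = res (Finset.subset_insert x X) (res hZY α) from rfl, hαγ, hγβ]
      have hdisj : ∀ γ₁ ∈ (proj' C (insert x X)).filter
            (fun γ => res (Finset.subset_insert x X) γ = β),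
          ∀ γ₂ ∈ (proj' C (insert x X)).filter
            (fun γ => res (Finset.subset_insert x X) γ = β), γ₁ ≠ γ₂ →
          Disjoint ((proj' C Y).filter (fun α => res hZY α = γ₁))
            ((proj' C Y).filter (fun α => res hZY α = γ₂)) := by
        intro γ₁ _ γ₂ _ hne
        rw [Finset.disjoint_left]
        intro α hα₁ hα₂
        exact hne ((Finset.mem_filter.mp hα₁).2 ▸ (Finset.mem_filter.mp hα₂).2 ▸ rfl)
      have hcard := congrArg Finset.card hdecomp
      rw [Finset.card_biUnion hdisj] at hcard
      have hinner : ∀ γ ∈ (proj' C (insert x X)).filter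
            (fun γ => res (Finset.subset_insert x X) γ = β),
          ((proj' C Y).filter (fun α => res hZY α = γ)).card
            * Fintype.card F ^ r (insert x X) = Fintype.card F ^ r Y := by
        intro γ hγ
        exact IH (p - 1) (by omega) (insert x X) Y hZY hYZcard γ (Finset.mem_filter.mp hγ).1
      have hsum2 : (∑ γ ∈ (proj' C (insert x X)).filter
              (fun γ => res (Finset.subset_insert x X) γ = β),
            ((proj' C Y).filter (fun α => res hZY α = γ)).card)
              * Fintype.card F ^ r (insert x X)
          = ((proj' C (insert x X)).filter
              (fun γ => res (Finset.subset_insert x X) γ = β)).card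
              * Fintype.card F ^ r Y := by
        rw [Finset.sum_mul, Finset.sum_congr rfl hinner, Finset.sum_const, smul_eq_mul]
      have hone := one_step (r := r) hq hr (x := x) (X := X) hβ
      have hqpos : 0 < Fintype.card F := by omega
      have h5 : (((proj' C Y).filter (fun α => res h α = β)).card * Fintype.card F ^ r X)
            * Fintype.card F ^ r (insert x X)
          = Fintype.card F ^ r Y * Fintype.card F ^ r (insert x X) := by
        calc (((proj' C Y).filter (fun α => res h α = β)).card * Fintype.card F ^ r X)
              * Fintype.card F ^ r (insert x X)
            = (((proj' C Y).filter (fun α => res h α = β)).card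
                * Fintype.card F ^ r (insert x X)) * Fintype.card F ^ r X := by ring
          _ = (((proj' C (insert x X)).filter
                (fun γ => res (Finset.subset_insert x X) γ = β)).card
                * Fintype.card F ^ r Y) * Fintype.card F ^ r X := by rw [hcard, hsum2]
          _ = (((proj' C (insert x X)).filter
                (fun γ => res (Finset.subset_insert x X) γ = β)).card
                * Fintype.card F ^ r X) * Fintype.card F ^ r Y := by ring
          _ = Fintype.card F ^ r (insert x X) * Fintype.card F ^ r Y := by rw [hone]
          _ = Fintype.card F ^ r Y * Fintype.card F ^ r (insert x X) := by ring
      exact Nat.eq_of_mul_eq_mul_right (pow_pos hqpos (r (insert x X))) h5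
lemma agree'_card (hq : 1 < Fintype.card F) (hC : C.card = Fintype.card F ^ k)
    (hr : ∀ X : Finset ι, (proj' C X).card = Fintype.card F ^ r X)
    {ct : ι → F} (hct : ct ∈ C) (X : Finset ι) :
    (agree' C X ct).card * Fintype.card F ^ r X = Fintype.card F ^ k := by
  have hsub : X ⊆ univ := Finset.subset_univ X
  have hβ : (fun i => ct i.1 : {i // i ∈ X} → F) ∈ proj' C X := Finset.mem_image_of_mem _ hct
  have hbij : (agree' C X ct).card
      = ((proj' C univ).filter
          (fun α => res hsub α = (fun i => ct i.1 : {i // i ∈ X} → F))).card := by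
    apply Finset.card_bij (fun c _ => (fun i => c i.1 : {i // i ∈ (univ : Finset ι)} → F))
    · intro c hc
      obtain ⟨hcC, hagree⟩ := Finset.mem_filter.mp hc
      refine Finset.mem_filter.mpr ⟨Finset.mem_image_of_mem _ hcC, ?_⟩
      funext i
      exact hagree i.1 i.2
    · intro c₁ h₁ c₂ h₂ heq
      funext y
      exact congrFun heq ⟨y, Finset.mem_univ y⟩
    · intro α hα
      obtain ⟨hαmem, hαβ⟩ := Finset.mem_filter.mp hα
      obtain ⟨c, hcC, rfl⟩ := Finset.mem_image.mp hαmem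
      refine ⟨c, Finset.mem_filter.mpr ⟨hcC, ?_⟩, rfl⟩
      intro i hi
      exact congrFun hαβ ⟨i, hi⟩
  have hk : Fintype.card F ^ r (univ : Finset ι) = Fintype.card F ^ k := by
    rw [← hr, proj'_univ_card, hC]
  rw [hbij, fib_card hq hr ((univ \ X).card) X univ hsub rfl _ hβ, hk]

lemma agree_step (hq : 1 < Fintype.card F) (hC : C.card = Fintype.card F ^ k)
    (hr : ∀ X : Finset ι, (proj' C X).card = Fintype.card F ^ r X)
    {S : Finset ι} {y : ι} (hy : r (insert y S) = r S)
    {c c' : ι → F} (hc : c ∈ C) (hc' : c' ∈ C)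
    (hagr : ∀ i ∈ S, c' i = c i) : c' y = c y := by
  have h1 := agree'_card (k := k) hq hC hr hc S
  have h2 := agree'_card (k := k) hq hC hr hc (insert y S)
  rw [hy] at h2
  have hqpos : 0 < Fintype.card F := by omega
  have hcards : (agree' C (insert y S) c).card = (agree' C S c).card :=
    Nat.eq_of_mul_eq_mul_right (pow_pos hqpos (r S)) (h2.trans h1.symm)
  have hsub : agree' C (insert y S) c ⊆ agree' C S c := by
    intro w hw
    obtain ⟨hwC, hagree⟩ := Finset.mem_filter.mp hw
    exact Finset.mem_filter.mpr ⟨hwC, fun i hi => hagree i (Finset.mem_insert_of_mem hi)⟩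
  have heq := Finset.eq_of_subset_of_card_le hsub (le_of_eq hcards.symm)
  have hc'mem : c' ∈ agree' C (insert y S) c := by
    rw [heq]
    exact Finset.mem_filter.mpr ⟨hc', hagr⟩
  exact (Finset.mem_filter.mp hc'mem).2 y (Finset.mem_insert_self y S)

lemma exists_indep (hq : 1 < Fintype.card F) (hC : C.card = Fintype.card F ^ k)
    (hr : ∀ X : Finset ι, (proj' C X).card = Fintype.card F ^ r X) :
    ∀ m, m ≤ k → ∃ B : Finset ι, B.card = m ∧ r B = m := by
  intro m
  induction m with
  | zero =>
    intro _
    refine ⟨∅, Finset.card_empty, ?_⟩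
    have hpos : 0 < (proj' C (∅ : Finset ι)).card := by
      apply Finset.card_pos.mpr
      apply Finset.Nonempty.image
      exact Finset.card_pos.mp (by rw [hC]; exact pow_pos (by omega) k)
    have hle : (proj' C (∅ : Finset ι)).card ≤ 1 := by
      apply Finset.card_le_one.mpr
      intro a _ b _
      funext i
      exact absurd i.2 (Finset.notMem_empty _)
    have h1 : Fintype.card F ^ r (∅ : Finset ι) = 1 := by
      rw [← hr]; omega
    exact Nat.pow_right_injective (by omega) (h1.trans (pow_zero _).symm)
  | succ m IHm =>
    intro hm1
    obtain ⟨B, hBcard, hBr⟩ := IHm (by omega)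
    have hex : ∃ x, r (insert x B) = m + 1 := by
      by_contra hcon
      push_neg at hcon
      have hall : ∀ x, r (insert x B) = r B := by
        intro x
        have h1 : r B ≤ r (insert x B) := r_mono hq hr (Finset.subset_insert x B)
        have h2 : r (insert x B) ≤ r B + 1 := r_insert_le hq hr x B
        have h3 := hcon x
        omega
      have hinj : Set.InjOn (fun c : ι → F => (fun i => c i.1 : {i // i ∈ B} → F)) C := by
        intro c₁ h₁ c₂ h₂ heq
        funext y
        exact agree_step (k := k) hq hC hr (hall y) (Finset.mem_coe.mp h₂)
          (Finset.mem_coe.mp h₁) (fun i hi => congrFun heq ⟨i, hi⟩)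
      have hle : C.card ≤ (proj' C B).card := Finset.card_le_card_of_injOn _
        (fun c hc => Finset.mem_image_of_mem _ hc) hinj
      rw [hC, hr, hBr] at hle
      have := (Nat.pow_le_pow_iff_right hq).mp hle
      omega
    obtain ⟨x, hx⟩ := hex
    have hxB : x ∉ B := by
      intro hmem
      rw [Finset.insert_eq_self.mpr hmem, hBr] at hx
      omega
    exact ⟨insert x B, by rw [Finset.card_insert_of_notMem hxB, hBcard], hx⟩

lemma exists_exact (hq : 1 < Fintype.card F)
    (hr : ∀ X : Finset ι, (proj' C X).card = Fintype.card F ^ r X) (j : ℕ) :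
    ∀ (c : ℕ) (W : Finset ι), W.card = c → j + r W ≤ W.card →
    ∃ W' : Finset ι, W'.card = r W' + j := by
  intro c
  induction c using Nat.strong_induction_on with
  | _ c IH =>
    intro W hWc hWj
    rcases Nat.eq_or_lt_of_le hWj with heq | hlt
    · exact ⟨W, by omega⟩
    · have hWpos : 0 < W.card := by omega
      obtain ⟨x, hxW⟩ := Finset.card_pos.mp hWpos
      have hrle : r (W.erase x) ≤ r W := r_mono hq hr (Finset.erase_subset x W)
      have hcarde : (W.erase x).card = c - 1 := by rw [Finset.card_erase_of_mem hxW, hWc]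
      exact IH (c - 1) (by omega) (W.erase x) hcarde (by omega)

lemma projproj (C : Finset (ι → F)) (A : Finset ι) (X' : Finset {i // i ∈ A}) :
    (proj' (proj' C A) X').card = (proj' C (X'.image Subtype.val)).card := by
  classical
  have hΨinj : Function.Injective
      (fun (h : {i // i ∈ X'.image Subtype.val} → F) =>
        (fun i' => h ⟨i'.1.1, Finset.mem_image_of_mem _ i'.2⟩ : {i' // i' ∈ X'} → F)) := by
    intro h h' heq
    funext i
    obtain ⟨a, ha, hav⟩ := Finset.mem_image.mp i.2
    have h3 := congrFun heq ⟨a, ha⟩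
    have hai : (⟨a.1, Finset.mem_image_of_mem Subtype.val ha⟩ :
        {i // i ∈ X'.image Subtype.val}) = i := Subtype.ext hav
    rw [← hai]
    exact h3
  have h1 : proj' (proj' C A) X'
      = C.image (fun c => (fun i' => c i'.1.1 : {i' // i' ∈ X'} → F)) := by
    unfold proj'
    rw [Finset.image_image]
    rfl
  have h2 : (proj' C (X'.image Subtype.val)).image
      (fun (h : {i // i ∈ X'.image Subtype.val} → F) =>
        (fun i' => h ⟨i'.1.1, Finset.mem_image_of_mem _ i'.2⟩ : {i' // i' ∈ X'} → F))
      = C.image (fun c => (fun i' => c i'.1.1 : {i' // i' ∈ X'} → F)) := by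
    unfold proj'
    rw [Finset.image_image]
    rfl
  rw [h1, ← h2, Finset.card_image_of_injective _ hΨinj]
lemma r_le_add_sdiff (hq : 1 < Fintype.card F)
    (hr : ∀ X : Finset ι, (proj' C X).card = Fintype.card F ^ r X) :
    ∀ (p : ℕ) (S T : Finset ι), S ⊆ T → (T \ S).card = p → r T ≤ r S + p := by
  intro p
  induction p using Nat.strong_induction_on with
  | _ p IH =>
    intro S T hST hp
    rcases Nat.eq_zero_or_pos p with h0 | hpos
    · subst h0
      have hTS : T ⊆ S := by
        rwa [← Finset.sdiff_eq_empty_iff_subset, ← Finset.card_eq_zero]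
      have : T = S := Finset.Subset.antisymm hTS hST
      rw [this]
      omega
    · obtain ⟨x, hx⟩ := Finset.card_pos.mp (hp ▸ hpos)
      have hxT : x ∈ T := (Finset.mem_sdiff.mp hx).1
      have hxS : x ∉ S := (Finset.mem_sdiff.mp hx).2
      have hsub : insert x S ⊆ T := Finset.insert_subset hxT hST
      have hcard : (T \ insert x S).card = p - 1 := by
        rw [Finset.sdiff_insert, Finset.card_erase_of_mem hx, hp]
      have h1 := IH (p - 1) (by omega) (insert x S) T hsub hcard
      have h2 := r_insert_le hq hr x S
      omega

end KungAux

theorem auxMain {F : Type*} [Fintype F] [DecidableEq F] (hq : 1 < Fintype.card F) :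
    ∀ (k : ℕ) {ι : Type} [Fintype ι] [DecidableEq ι] (C : Finset (ι → F)) (ct : ι → F)
      (j d : ℕ),
      C.card = Fintype.card F ^ k →
      (∀ X : Finset ι, ∃ s, (proj' C X).card = Fintype.card F ^ s) →
      (∀ x : ι, 1 < (proj' C ({x} : Finset ι)).card) →
      ct ∈ C → 1 ≤ j → k + j ≤ Fintype.card ι →
      (∀ X : Finset ι, (proj' C X).card * Fintype.card F ^ j = Fintype.card F ^ X.card →
        d ≤ X.card) →
      ∃ (m : ℕ) (cs : Fin m → ι → F), (∀ l, cs l ∈ C) ∧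
        Fintype.card ι + 1 ≤ j + (Finset.univ.biUnion fun l => supp' (cs l) ct).card ∧
        m + d ≤ k + j + 2 := by
  intro k
  induction k using Nat.strong_induction_on with
  | _ k IH =>
  intro ι iF iD C ct j d hC hproj hnd hct hj hcard hd
  classical
  choose r hr using hproj
  have hqpos : 0 < Fintype.card F := by omega
  have hι : 0 < Fintype.card ι := by omega
  obtain ⟨x₀⟩ := Fintype.card_pos_iff.mp hι
  have hk1 : 1 ≤ k := by
    by_contra hcon
    have hk0 : k = 0 := by omega
    have h1 : (proj' C ({x₀} : Finset ι)).card ≤ C.card := Finset.card_image_le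
    rw [hC, hk0, pow_zero] at h1
    have := hnd x₀
    omega
  have hruniv : r (univ : Finset ι) = k :=
    Nat.pow_right_injective (by omega : 2 ≤ Fintype.card F)
      (by show Fintype.card F ^ r (univ : Finset ι) = Fintype.card F ^ k
          rw [← hr, proj'_univ_card, hC])
  have hd' : ∀ X : Finset ι, X.card = r X + j → d ≤ X.card := by
    intro X hX
    apply hd
    rw [hr, ← pow_add, ← hX]
  obtain ⟨W, hW⟩ := exists_exact hq hr j (Fintype.card ι) univ
    (by rw [Finset.card_univ]) (by rw [hruniv, Finset.card_univ]; omega)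
  have hdkj : d ≤ k + j := by
    have h1 := hd' W hW
    have h2 : r W ≤ k := by rw [← hruniv]; exact r_mono hq hr (Finset.subset_univ W)
    omega
  by_cases hcase : ∃ Y : Finset ι, r Y < k ∧ j + r Y ≤ Y.card
  · -- Case 1 : there is a non-spanning set of nullity ≥ j
    obtain ⟨Y, hY1, hY2⟩ := hcase
    have hagY := agree'_card (k := k) hq hC hr hct Y
    have hagYcard : 1 < (agree' C Y ct).card := by
      by_contra hcon
      push_neg at hcon
      have hle : Fintype.card F ^ k ≤ Fintype.card F ^ r Y := by
        calc Fintype.card F ^ k = (agree' C Y ct).card * Fintype.card F ^ r Y := hagY.symm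
          _ ≤ 1 * Fintype.card F ^ r Y := Nat.mul_le_mul_right _ hcon
          _ = Fintype.card F ^ r Y := one_mul _
      have := (Nat.pow_le_pow_iff_right hq).mp hle
      omega
    obtain ⟨c₁, hc₁mem, hc₁ne⟩ := Finset.exists_mem_ne hagYcard ct
    have hc₁C : c₁ ∈ C := Finset.mem_of_mem_filter _ hc₁mem
    have hc₁agY : ∀ i ∈ Y, c₁ i = ct i := (Finset.mem_filter.mp hc₁mem).2
    set A₁ := univ.filter (fun i => c₁ i = ct i) with hA₁def
    have hYA : Y ⊆ A₁ := fun i hi => Finset.mem_filter.mpr ⟨Finset.mem_univ i, hc₁agY i hi⟩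
    have hc₁agA : c₁ ∈ agree' C A₁ ct :=
      Finset.mem_filter.mpr ⟨hc₁C, fun i hi => (Finset.mem_filter.mp hi).2⟩
    have hctagA : ct ∈ agree' C A₁ ct := Finset.mem_filter.mpr ⟨hct, fun i _ => rfl⟩
    have htk : r A₁ < k := by
      by_contra hcon
      push_neg at hcon
      have h2 : r A₁ ≤ k := by rw [← hruniv]; exact r_mono hq hr (Finset.subset_univ _)
      have heqk : r A₁ = k := le_antisymm h2 hcon
      have hag := agree'_card (k := k) hq hC hr hct A₁
      rw [heqk] at hag
      have hcard1 : (agree' C A₁ ct).card = 1 :=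
        Nat.eq_of_mul_eq_mul_right (pow_pos hqpos k) (by rw [hag, one_mul])
      exact hc₁ne (Finset.card_le_one.mp (le_of_eq hcard1) _ hc₁agA _ hctagA)
    have hA₁n : r A₁ + j ≤ A₁.card := by
      have h1 := r_le_add_sdiff hq hr ((A₁ \ Y).card) Y A₁ hYA rfl
      have h2 : (A₁ \ Y).card = A₁.card - Y.card := Finset.card_sdiff_of_subset hYA
      have h3 : Y.card ≤ A₁.card := Finset.card_le_card hYA
      omega
    have hC'card : (proj' C A₁).card = Fintype.card F ^ r A₁ := hr A₁
    have hproj' : ∀ X' : Finset {i // i ∈ A₁},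
        ∃ s, (proj' (proj' C A₁) X').card = Fintype.card F ^ s := by
      intro X'
      exact ⟨r (X'.image Subtype.val), by rw [projproj, hr]⟩
    have hnd' : ∀ x : {i // i ∈ A₁}, 1 < (proj' (proj' C A₁) ({x} : Finset _)).card := by
      intro x
      rw [projproj]
      have himg : ({x} : Finset {i // i ∈ A₁}).image Subtype.val = {x.1} :=
        Finset.image_singleton _ _
      rw [himg]
      exact hnd x.1
    have hct' : (fun i => ct i.1 : {i // i ∈ A₁} → F) ∈ proj' C A₁ :=
      Finset.mem_image_of_mem _ hct
    have hcard' : r A₁ + j ≤ Fintype.card {i // i ∈ A₁} := by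
      rw [Fintype.card_coe]; exact hA₁n
    have hd'' : ∀ X' : Finset {i // i ∈ A₁},
        (proj' (proj' C A₁) X').card * Fintype.card F ^ j = Fintype.card F ^ X'.card →
        d ≤ X'.card := by
      intro X' hX'
      rw [projproj] at hX'
      have hcardeq : (X'.image Subtype.val).card = X'.card :=
        Finset.card_image_of_injective _ Subtype.val_injective
      rw [← hcardeq] at hX' ⊢
      exact hd _ hX'
    obtain ⟨m', cs', hmem', hcov', hbound'⟩ :=
      IH (r A₁) htk (proj' C A₁) (fun i => ct i.1) j d hC'card hproj' hnd' hct' hj hcard' hd''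
    have hlift : ∀ l, ∃ c, c ∈ C ∧ (fun i => c i.1 : {i // i ∈ A₁} → F) = cs' l := by
      intro l
      obtain ⟨c, hc, hceq⟩ := Finset.mem_image.mp (hmem' l)
      exact ⟨c, hc, hceq⟩
    choose lift hliftC hlifteq using hlift
    refine ⟨m' + 1, Fin.cases c₁ lift, ?_, ?_, by omega⟩
    · intro l
      induction l using Fin.cases with
      | zero => simpa using hc₁C
      | succ l' => simpa using hliftC l'
    · have hsub1 : (univ \ A₁) ∪ (univ.biUnion fun l => supp' (cs' l)
            (fun i => ct i.1)).image Subtype.val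
          ⊆ univ.biUnion fun l => supp' ((Fin.cases c₁ lift : Fin (m'+1) → ι → F) l) ct := by
        intro i hi
        rcases Finset.mem_union.mp hi with hi1 | hi2
        · refine Finset.mem_biUnion.mpr ⟨0, Finset.mem_univ _, ?_⟩
          simp only [Fin.cases_zero]
          have hne : c₁ i ≠ ct i := fun heq =>
            (Finset.mem_sdiff.mp hi1).2 (Finset.mem_filter.mpr ⟨Finset.mem_univ i, heq⟩)
          exact Finset.mem_filter.mpr ⟨Finset.mem_univ _, hne⟩
        · obtain ⟨i', hi', rfl⟩ := Finset.mem_image.mp hi2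
          obtain ⟨l', _, hl'⟩ := Finset.mem_biUnion.mp hi'
          refine Finset.mem_biUnion.mpr ⟨l'.succ, Finset.mem_univ _, ?_⟩
          simp only [Fin.cases_succ]
          have hne := (Finset.mem_filter.mp hl').2
          refine Finset.mem_filter.mpr ⟨Finset.mem_univ _, ?_⟩
          intro heq
          apply hne
          rw [← congrFun (hlifteq l') i']
          exact heq
      have hdisj : Disjoint (univ \ A₁)
          ((univ.biUnion fun l => supp' (cs' l) (fun i => ct i.1)).image Subtype.val) := by
        rw [Finset.disjoint_left]
        intro a ha hb
        obtain ⟨i', _, rfl⟩ := Finset.mem_image.mp hb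
        exact (Finset.mem_sdiff.mp ha).2 i'.2
      have hucard := Finset.card_le_card hsub1
      rw [Finset.card_union_of_disjoint hdisj] at hucard
      have himg : ((univ.biUnion fun l => supp' (cs' l) (fun i => ct i.1)).image
            Subtype.val).card
          = (univ.biUnion fun l => supp' (cs' l) (fun i => ct i.1)).card :=
        Finset.card_image_of_injective _ Subtype.val_injective
      have hsd : (univ \ A₁).card + A₁.card = Fintype.card ι := by
        rw [Finset.card_sdiff_add_card_eq_card (Finset.subset_univ _), Finset.card_univ]
      rw [Fintype.card_coe] at hcov'
      calc Fintype.card ι + 1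
          ≤ j + ((univ \ A₁).card + ((univ.biUnion fun l => supp' (cs' l)
              (fun i => ct i.1)).image Subtype.val).card) := by omega
        _ ≤ j + (univ.biUnion fun l =>
              supp' ((Fin.cases c₁ lift : Fin (m'+1) → ι → F) l) ct).card :=
            Nat.add_le_add_left hucard _
  · -- Case 2
    push_neg at hcase
    obtain ⟨B', hB'card, hB'r⟩ := exists_indep hq hC hr (k - 1) (by omega)
    set H := univ.filter (fun y => r (insert y B') = r B') with hHdef
    have hB'H : B' ⊆ H := by
      intro b hb
      exact Finset.mem_filter.mpr ⟨Finset.mem_univ b, by rw [Finset.insert_eq_self.mpr hb]⟩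
    have hrH_ge : r B' ≤ r H := r_mono hq hr hB'H
    have hrH_le : r H ≤ r B' := by
      have hinj : Set.InjOn (res hB'H) ((proj' C H : Finset _) : Set ({i // i ∈ H} → F)) := by
        intro α₁ h₁ α₂ h₂ heq
        obtain ⟨c₁', hc₁', rfl⟩ := Finset.mem_image.mp (Finset.mem_coe.mp h₁)
        obtain ⟨c₂', hc₂', rfl⟩ := Finset.mem_image.mp (Finset.mem_coe.mp h₂)
        have hagB : ∀ i ∈ B', c₁' i = c₂' i := fun i hi => congrFun heq ⟨i, hi⟩
        funext i
        have hyr : r (insert i.1 B') = r B' := (Finset.mem_filter.mp i.2).2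
        exact agree_step (k := k) hq hC hr hyr hc₂' hc₁' hagB
      have hle : (proj' C H).card ≤ (proj' C B').card :=
        Finset.card_le_card_of_injOn _ (fun α hα => res_mem_proj' hB'H hα) hinj
      rw [hr, hr] at hle
      exact (Nat.pow_le_pow_iff_right hq).mp hle
    have hrH : r H = r B' := le_antisymm hrH_le hrH_ge
    have hHcard : H.card < j + r B' := by
      have := hcase H (by rw [hrH, hB'r]; omega)
      rwa [hrH] at this
    have hag := agree'_card (k := k) hq hC hr hct H
    have hagcard : 1 < (agree' C H ct).card := by
      rw [hrH, hB'r] at hag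
      have hqk : Fintype.card F ^ k = Fintype.card F ^ (k-1) * Fintype.card F := by
        rw [← pow_succ]; congr 1; omega
      rw [hqk] at hag
      have hcardq : (agree' C H ct).card = Fintype.card F :=
        Nat.eq_of_mul_eq_mul_right (pow_pos hqpos (k-1)) (hag.trans (mul_comm _ _))
      omega
    obtain ⟨c₁, hc₁mem, hc₁ne⟩ := Finset.exists_mem_ne hagcard ct
    have hc₁C : c₁ ∈ C := Finset.mem_of_mem_filter _ hc₁mem
    have hc₁agH : ∀ i ∈ H, c₁ i = ct i := (Finset.mem_filter.mp hc₁mem).2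
    have hsupp1 : ∀ y, y ∉ H → c₁ y ≠ ct y := by
      intro y hy heq
      have h1 : r B' ≤ r (insert y B') := r_mono hq hr (Finset.subset_insert _ _)
      have h2 : r (insert y B') ≤ r B' + 1 := r_insert_le hq hr y B'
      have h3 : ¬ (r (insert y B') = r B') := by
        intro hc; exact hy (Finset.mem_filter.mpr ⟨Finset.mem_univ y, hc⟩)
      have hyr : r (insert y B') = k := by omega
      have hagin := agree'_card (k := k) hq hC hr hct (insert y B')
      rw [hyr] at hagin
      have hcard1 : (agree' C (insert y B') ct).card = 1 :=
        Nat.eq_of_mul_eq_mul_right (pow_pos hqpos k) (by rw [hagin, one_mul])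
      have hc₁in : c₁ ∈ agree' C (insert y B') ct := by
        refine Finset.mem_filter.mpr ⟨hc₁C, ?_⟩
        intro i hi
        rcases Finset.mem_insert.mp hi with rfl | hiB
        · exact heq
        · exact hc₁agH i (hB'H hiB)
      have hctin : ct ∈ agree' C (insert y B') ct := Finset.mem_filter.mpr ⟨hct, fun _ _ => rfl⟩
      exact hc₁ne (Finset.card_le_one.mp (le_of_eq hcard1) _ hc₁in _ hctin)
    have hprojB' : proj' C B' = (univ : Finset ({i // i ∈ B'} → F)) := by
      apply Finset.eq_univ_of_card
      rw [hr, hB'r, Fintype.card_fun, Fintype.card_coe, hB'card]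
    have hnontriv : Nontrivial F := Fintype.one_lt_card_iff_nontrivial.mp hq
    have hgex : ∀ i : {i // i ∈ B'}, ∃ v : F, v ≠ ct i.1 := fun i => exists_ne (ct i.1)
    choose g hg using hgex
    have hgmem : g ∈ proj' C B' := by rw [hprojB']; exact Finset.mem_univ g
    obtain ⟨c₂, hc₂C, hc₂eq⟩ := Finset.mem_image.mp hgmem
    have hc₂supp : ∀ b ∈ B', c₂ b ≠ ct b := by
      intro b hb
      have hcb : c₂ b = g ⟨b, hb⟩ := congrFun hc₂eq ⟨b, hb⟩
      rw [hcb]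
      exact hg ⟨b, hb⟩
    refine ⟨2, ![c₁, c₂], ?_, ?_, by omega⟩
    · intro l
      fin_cases l
      · simpa using hc₁C
      · simpa using hc₂C
    · have hsub1 : (univ \ H) ∪ B' ⊆ univ.biUnion fun l => supp' (![c₁, c₂] l) ct := by
        intro i hi
        rcases Finset.mem_union.mp hi with hi1 | hi2
        · refine Finset.mem_biUnion.mpr ⟨0, Finset.mem_univ _, ?_⟩
          simp only [Matrix.cons_val_zero]
          exact Finset.mem_filter.mpr ⟨Finset.mem_univ _, hsupp1 i (Finset.mem_sdiff.mp hi1).2⟩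
        · refine Finset.mem_biUnion.mpr ⟨1, Finset.mem_univ _, ?_⟩
          simp only [Matrix.cons_val_one, Matrix.head_cons]
          exact Finset.mem_filter.mpr ⟨Finset.mem_univ _, hc₂supp i hi2⟩
      have hdisj : Disjoint (univ \ H) B' := by
        rw [Finset.disjoint_left]
        intro a ha hb
        exact (Finset.mem_sdiff.mp ha).2 (hB'H hb)
      have hucard := Finset.card_le_card hsub1
      rw [Finset.card_union_of_disjoint hdisj] at hucard
      have hsd : (univ \ H).card + H.card = Fintype.card ι := by
        rw [Finset.card_sdiff_add_card_eq_card (Finset.subset_univ _), Finset.card_univ]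
      calc Fintype.card ι + 1 ≤ j + ((univ \ H).card + B'.card) := by omega
        _ ≤ j + (univ.biUnion fun l => supp' (![c₁, c₂] l) ct).card :=
            Nat.add_le_add_left hucard _

/-- generalized Kung bound: for a non-degenerate almost affine code `C`
of length `n` and dimension `k` and `k+1 ≤ i ≤ n`, `γ_i ≤ s*_{n+1-i} + 2`, where
`s*_j = k + j - d*_j` and `d*_j = min{|X| : |X| - r(X) = j}` is the `j`-th generalized
Hamming weight of the matroid `M_C`. -/
theorem generalized_kung_bound
    {F : Type*} [Fintype F] [DecidableEq F] (hF : 1 < Fintype.card F)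
    {n k : ℕ} (C : Finset (Fin n → F)) (hC : IsAlmostAffineCode n k C)
    (r : Finset (Fin n) → ℕ)
    (hr : ∀ X : Finset (Fin n), (projC C X).card = Fintype.card F ^ r X)
    (hnd : ∀ x : Fin n, 1 < (projC C {x}).card)
    (ct : Fin n → F) (hct : ct ∈ C)
    (i : ℕ) (hi1 : k + 1 ≤ i) (hi2 : i ≤ n) :
    (critExp C ct i : ℤ) ≤
      ((k : ℤ) + ((n + 1 - i : ℕ) : ℤ)
        - ((sInf {m : ℕ | ∃ X : Finset (Fin n), X.card = m ∧
            X.card = r X + (n + 1 - i)} : ℕ) : ℤ)) + 2 := by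
  classical
  obtain ⟨hCcard, hCproj⟩ := hC
  set j := n + 1 - i with hjdef
  have hj1 : 1 ≤ j := by omega
  set dval := sInf {m : ℕ | ∃ X : Finset (Fin n), X.card = m ∧ X.card = r X + j} with hdval
  have hproj : ∀ X : Finset (Fin n), ∃ s, (proj' C X).card = Fintype.card F ^ s := hCproj
  have hnd' : ∀ x : Fin n, 1 < (proj' C ({x} : Finset (Fin n))).card := hnd
  have hd : ∀ X : Finset (Fin n),
      (proj' C X).card * Fintype.card F ^ j = Fintype.card F ^ X.card → dval ≤ X.card := by
    intro X hX
    have h1 : (proj' C X).card = Fintype.card F ^ r X := hr X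
    rw [h1, ← pow_add] at hX
    have hrX : X.card = r X + j :=
      (Nat.pow_right_injective (by omega : 2 ≤ Fintype.card F) hX).symm
    exact Nat.sInf_le ⟨X, rfl, hrX⟩
  obtain ⟨m, cs, hmem, hcov, hbound⟩ := auxMain hF k C ct j dval hCcard hproj hnd' hct hj1
    (by rw [Fintype.card_fin]; omega) hd
  rw [Fintype.card_fin] at hcov
  have hle : i ≤ (Finset.univ.biUnion fun l => suppW (cs l) ct).card := by
    have h2 : i ≤ (Finset.univ.biUnion fun l => supp' (cs l) ct).card := by omega
    exact h2
  have hcrit : critExp C ct i ≤ m := by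
    have hmemS : m ∈ {j : ℕ | ∃ cs : Fin j → (Fin n → F), (∀ l, cs l ∈ C) ∧
        i ≤ (Finset.univ.biUnion fun l => suppW (cs l) ct).card} := ⟨cs, hmem, hle⟩
    exact Nat.sInf_le hmemS
  omega
end
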